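/- arXiv:2406.17723 — 4 statements merged into one kernel-verified Lean document; each statement's English description precedes it below -/
import Mathlib

section
/- If d and D are nonnegative integers and k = ⌊D/(d+1)⌋ + 1, then the vertex set of any graph G with maximum degree at most D can be partitioned into k sets V1,…,Vk such that each induced subgraph G[Vi] has maximum degree at most d. -/
lemma touching_card {V : Type*} [Fintype V] [DecidableEq V]
    (G : SimpleGraph V) [DecidableRel G.Adj] {k : ℕ} (g : V → Fin k) (v : V) :
    (Finset.univ.filter
        (fun p : V × V => (G.Adj p.1 p.2 ∧ g p.1 = g p.2) ∧ (p.1 = v ∨ p.2 = v))).card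
      = 2 * ((G.neighborFinset v).filter (fun w => g w = g v)).card := by
  classical
  set T := (G.neighborFinset v).filter (fun w => g w = g v) with hT
  have hset : Finset.univ.filter
        (fun p : V × V => (G.Adj p.1 p.2 ∧ g p.1 = g p.2) ∧ (p.1 = v ∨ p.2 = v))
      = T.image (fun w => (v, w)) ∪ T.image (fun w => (w, v)) := by
    ext ⟨a, b⟩
    simp only [Finset.mem_filter, Finset.mem_univ, true_and, Finset.mem_union,
      Finset.mem_image, hT, SimpleGraph.mem_neighborFinset, Prod.mk.injEq]
    constructor
    · rintro ⟨⟨hadj, hg⟩, h | h⟩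
      · subst h; exact Or.inl ⟨b, ⟨hadj, hg.symm⟩, rfl, rfl⟩
      · subst h; exact Or.inr ⟨a, ⟨hadj.symm, hg⟩, rfl, rfl⟩
    · rintro (⟨w, ⟨hadj, hg⟩, h1, h2⟩ | ⟨w, ⟨hadj, hg⟩, h1, h2⟩)
      · subst h1; subst h2; exact ⟨⟨hadj, hg.symm⟩, Or.inl rfl⟩
      · subst h1; subst h2; exact ⟨⟨hadj.symm, hg⟩, Or.inr rfl⟩
  rw [hset, Finset.card_union_of_disjoint, Finset.card_image_of_injective,
    Finset.card_image_of_injective, two_mul]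
  · exact fun x y h => (Prod.mk.injEq _ _ _ _).mp h |>.1
  · exact fun x y h => (Prod.mk.injEq _ _ _ _).mp h |>.2
  · rw [Finset.disjoint_left]
    rintro ⟨a, b⟩ h1 h2
    simp only [Finset.mem_image, hT, Finset.mem_filter, SimpleGraph.mem_neighborFinset,
      Prod.mk.injEq] at h1 h2
    obtain ⟨w, ⟨hw, -⟩, h1a, h1b⟩ := h1
    obtain ⟨u, ⟨hu, -⟩, h2a, h2b⟩ := h2
    exact G.ne_of_adj hu (h1a.trans h2a.symm)

/-- Lovász's partition theorem: if `G` has maximum degree at most `D` and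
`k = ⌊D/(d+1)⌋ + 1`, then `V(G)` can be partitioned into `k` parts each of which
induces a subgraph of maximum degree at most `d`. -/
theorem stmt1 {V : Type*} [Fintype V] [DecidableEq V] (G : SimpleGraph V)
    [DecidableRel G.Adj] (d D : ℕ) (hD : ∀ v, G.degree v ≤ D) :
    ∃ f : V → Fin (D / (d + 1) + 1),
      ∀ v : V, ((G.neighborFinset v).filter fun u => f u = f v).card ≤ d := by
  classical
  obtain ⟨f, -, hf⟩ := Finset.exists_min_image (Finset.univ : Finset (V → Fin (D / (d + 1) + 1)))
    (fun g => (Finset.univ.filter (fun p : V × V => G.Adj p.1 p.2 ∧ g p.1 = g p.2)).card)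
    ⟨fun _ => 0, Finset.mem_univ _⟩
  refine ⟨f, fun v => ?_⟩
  by_contra hv
  push_neg at hv
  -- pigeonhole: a color c with few neighbors
  have hsum : ∑ c : Fin (D / (d + 1) + 1),
      ((G.neighborFinset v).filter (fun w => f w = c)).card = G.degree v := by
    rw [← SimpleGraph.card_neighborFinset_eq_degree]
    exact (Finset.card_eq_sum_card_fiberwise (fun x _ => Finset.mem_univ (f x))).symm
  have hD' : D < (D / (d + 1) + 1) * (d + 1) := by
    have h1 := Nat.div_add_mod D (d + 1)
    have h2 : D % (d + 1) < d + 1 := Nat.mod_lt _ (Nat.succ_pos d)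
    calc D = (d + 1) * (D / (d + 1)) + D % (d + 1) := h1.symm
      _ < (d + 1) * (D / (d + 1)) + (d + 1) := Nat.add_lt_add_left h2 _
      _ = (D / (d + 1) + 1) * (d + 1) := by ring
  obtain ⟨c, hc⟩ : ∃ c, ((G.neighborFinset v).filter (fun w => f w = c)).card ≤ d := by
    by_contra hall
    push_neg at hall
    have hge : (D / (d + 1) + 1) * (d + 1) ≤
        ∑ c : Fin (D / (d + 1) + 1), ((G.neighborFinset v).filter (fun w => f w = c)).card := by
      calc (D / (d + 1) + 1) * (d + 1)
          = ∑ _c : Fin (D / (d + 1) + 1), (d + 1) := by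
            simp [Finset.sum_const, mul_comm]
        _ ≤ _ := Finset.sum_le_sum (fun c _ => hall c)
    have := hD v
    omega
  set f' := Function.update f v c with hf'def
  -- decompose the count of monochromatic pairs
  have decomp : ∀ g : V → Fin (D / (d + 1) + 1),
      (Finset.univ.filter (fun p : V × V => G.Adj p.1 p.2 ∧ g p.1 = g p.2)).card
      = (Finset.univ.filter
          (fun p : V × V => (G.Adj p.1 p.2 ∧ g p.1 = g p.2) ∧ ¬(p.1 = v ∨ p.2 = v))).card
        + 2 * ((G.neighborFinset v).filter (fun w => g w = g v)).card := by
    intro g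
    have h := Finset.card_filter_add_card_filter_not
      (s := Finset.univ.filter (fun p : V × V => G.Adj p.1 p.2 ∧ g p.1 = g p.2))
      (p := fun p : V × V => p.1 = v ∨ p.2 = v)
    rw [Finset.filter_filter, Finset.filter_filter] at h
    rw [touching_card G g v] at h
    omega
  -- the "away" parts agree
  have haway : (Finset.univ.filter
          (fun p : V × V => (G.Adj p.1 p.2 ∧ f' p.1 = f' p.2) ∧ ¬(p.1 = v ∨ p.2 = v))).card
      = (Finset.univ.filter
          (fun p : V × V => (G.Adj p.1 p.2 ∧ f p.1 = f p.2) ∧ ¬(p.1 = v ∨ p.2 = v))).card := by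
    congr 1
    apply Finset.filter_congr
    rintro ⟨a, b⟩ -
    simp only [not_or]
    constructor
    · rintro ⟨⟨h1, h2⟩, h3, h4⟩
      rw [hf'def, Function.update_of_ne h3, Function.update_of_ne h4] at h2
      exact ⟨⟨h1, h2⟩, h3, h4⟩
    · rintro ⟨⟨h1, h2⟩, h3, h4⟩
      rw [hf'def]
      rw [Function.update_of_ne h3, Function.update_of_ne h4]
      exact ⟨⟨h1, h2⟩, h3, h4⟩
  -- the "at v" part strictly decreases
  have hatv : ((G.neighborFinset v).filter (fun w => f' w = f' v)).card
      ≤ d := by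
    have heq : ((G.neighborFinset v).filter (fun w => f' w = f' v))
        = (G.neighborFinset v).filter (fun w => f w = c) := by
      apply Finset.filter_congr
      intro w hw
      have hadj : G.Adj v w := (SimpleGraph.mem_neighborFinset _ _ _).mp hw
      rw [hf'def, Function.update_of_ne hadj.ne', Function.update_self]
    rw [heq]; exact hc
  have hlt : (Finset.univ.filter (fun p : V × V => G.Adj p.1 p.2 ∧ f' p.1 = f' p.2)).card
      < (Finset.univ.filter (fun p : V × V => G.Adj p.1 p.2 ∧ f p.1 = f p.2)).card := by
    rw [decomp f', decomp f, haway]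
    omega
  exact absurd (hf f' (Finset.mem_univ _)) (not_le.mpr hlt)
end

section
/- Let G be a graph, let 𝒳 and 𝒴 be collections of pairwise disjoint subsets of V(G), let R_X be an ISR of 𝒳 and R_Y an ISR of 𝒴. Suppose that no edge of G[R_X ∪ R_Y] is an E_{XY}-edge, i.e., every edge of the induced subgraph on R_X ∪ R_Y has both endpoints in a common member of 𝒳 or both endpoints in a common member of 𝒴. Then G has an independent set R ⊆ R_X ∪ R_Y that is simultaneously an ISR of 𝒳 and of 𝒴 (R contains at least one vertex of each X ∈ 𝒳 and each Y ∈ 𝒴). -/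
/-- Auxiliary induction: for subfamilies `𝒳' ⊆ 𝒳`, `𝒴' ⊆ 𝒴` we can find an
independent set consisting of representative-type vertices hitting all of `𝒳'`
and `𝒴'`. -/
theorem stmt6_aux {V : Type*} [DecidableEq V] (G : SimpleGraph V)
    (𝒳 𝒴 : Finset (Finset V))
    (hXdisj : (𝒳 : Set (Finset V)).Pairwise fun A B => Disjoint A B)
    (hYdisj : (𝒴 : Set (Finset V)).Pairwise fun A B => Disjoint A B)
    (RX RY : Finset V)
    (hRXind : ∀ u ∈ RX, ∀ v ∈ RX, ¬ G.Adj u v)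
    (hRXrep : ∀ X ∈ 𝒳, (X ∩ RX).card = 1)
    (hRYind : ∀ u ∈ RY, ∀ v ∈ RY, ¬ G.Adj u v)
    (hRYrep : ∀ Y ∈ 𝒴, (Y ∩ RY).card = 1)
    (hedge : ∀ u ∈ RX ∪ RY, ∀ v ∈ RX ∪ RY, G.Adj u v →
      (∃ X ∈ 𝒳, u ∈ X ∧ v ∈ X) ∨ (∃ Y ∈ 𝒴, u ∈ Y ∧ v ∈ Y)) :
    ∀ (n : ℕ) (𝒳' 𝒴' : Finset (Finset V)), 𝒴'.card ≤ n → 𝒳' ⊆ 𝒳 → 𝒴' ⊆ 𝒴 →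
    ∃ R : Finset V,
      (∀ v ∈ R, (v ∈ RX ∧ ∃ X ∈ 𝒳', v ∈ X) ∨ (v ∈ RY ∧ ∃ Y ∈ 𝒴', v ∈ Y)) ∧
      (∀ u ∈ R, ∀ v ∈ R, ¬ G.Adj u v) ∧
      (∀ X ∈ 𝒳', ∃ v ∈ R, v ∈ X) ∧ (∀ Y ∈ 𝒴', ∃ v ∈ R, v ∈ Y) := by
  classical
  intro n
  induction n with
  | zero =>
    intro 𝒳' 𝒴' hcard h𝒳' h𝒴'
    have h𝒴e : 𝒴' = ∅ := Finset.card_eq_zero.mp (Nat.le_zero.mp hcard)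
    subst h𝒴e
    refine ⟨RX.filter (fun v => ∃ X ∈ 𝒳', v ∈ X), ?_, ?_, ?_, ?_⟩
    · intro v hv
      rw [Finset.mem_filter] at hv
      exact Or.inl ⟨hv.1, hv.2⟩
    · intro u hu v hv
      rw [Finset.mem_filter] at hu hv
      exact hRXind u hu.1 v hv.1
    · intro X hX
      obtain ⟨w, hw⟩ := Finset.card_eq_one.mp (hRXrep X (h𝒳' hX))
      have hwmem : w ∈ X ∩ RX := by rw [hw]; exact Finset.mem_singleton_self w
      rw [Finset.mem_inter] at hwmem
      exact ⟨w, Finset.mem_filter.mpr ⟨hwmem.2, X, hX, hwmem.1⟩, hwmem.1⟩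
    · intro Y hY; exact absurd hY (Finset.notMem_empty Y)
  | succ n ih =>
    intro 𝒳' 𝒴' hcard h𝒳' h𝒴'
    by_cases hc : ∀ Y ∈ 𝒴', ∃ X ∈ 𝒳', ∃ w ∈ X ∩ RX, w ∈ Y
    · -- every Y in 𝒴' contains the RX-representative of some X in 𝒳'
      refine ⟨RX.filter (fun v => ∃ X ∈ 𝒳', v ∈ X), ?_, ?_, ?_, ?_⟩
      · intro v hv
        rw [Finset.mem_filter] at hv
        exact Or.inl ⟨hv.1, hv.2⟩
      · intro u hu v hv
        rw [Finset.mem_filter] at hu hv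
        exact hRXind u hu.1 v hv.1
      · intro X hX
        obtain ⟨w, hw⟩ := Finset.card_eq_one.mp (hRXrep X (h𝒳' hX))
        have hwmem : w ∈ X ∩ RX := by rw [hw]; exact Finset.mem_singleton_self w
        rw [Finset.mem_inter] at hwmem
        exact ⟨w, Finset.mem_filter.mpr ⟨hwmem.2, X, hX, hwmem.1⟩, hwmem.1⟩
      · intro Y hY
        obtain ⟨X, hX, w, hw, hwY⟩ := hc Y hY
        rw [Finset.mem_inter] at hw
        exact ⟨w, Finset.mem_filter.mpr ⟨hw.2, X, hX, hw.1⟩, hwY⟩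
    · -- some Y0 ∈ 𝒴' contains no RX-representative of any X ∈ 𝒳'
      push_neg at hc
      obtain ⟨Y0, hY0mem, hY0⟩ := hc
      have hY0𝒴 : Y0 ∈ 𝒴 := h𝒴' hY0mem
      obtain ⟨y0, hy0⟩ := Finset.card_eq_one.mp (hRYrep Y0 hY0𝒴)
      have hy0mem : y0 ∈ Y0 ∩ RY := by rw [hy0]; exact Finset.mem_singleton_self y0
      rw [Finset.mem_inter] at hy0mem
      obtain ⟨hy0Y0, hy0RY⟩ := hy0mem
      set 𝒳'' := 𝒳'.filter (fun X => y0 ∉ X) with h𝒳''def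
      have h𝒳''sub : 𝒳'' ⊆ 𝒳' := Finset.filter_subset _ _
      have hcard' : (𝒴'.erase Y0).card ≤ n := by
        have := Finset.card_erase_of_mem hY0mem
        omega
      obtain ⟨R', hinv', hind', hcovX', hcovY'⟩ :=
        ih 𝒳'' (𝒴'.erase Y0) hcard' (h𝒳''sub.trans h𝒳')
          ((Finset.erase_subset _ _).trans h𝒴')
      -- key claim: y0 is not adjacent to anything in R'
      have hkey : ∀ v ∈ R', ¬ G.Adj y0 v := by
        intro v hv hadj
        rcases hinv' v hv with ⟨hvRX, X, hX𝒳'', hvX⟩ | ⟨hvRY, _⟩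
        · have hX𝒳 : X ∈ 𝒳 := h𝒳' (h𝒳''sub hX𝒳'')
          rcases hedge y0 (Finset.mem_union_right _ hy0RY) v
              (Finset.mem_union_left _ hvRX) hadj with
            ⟨X'', hX''𝒳, hy0X'', hvX''⟩ | ⟨Y'', hY''𝒴, hy0Y'', hvY''⟩
          · -- edge inside a member of 𝒳 : then X'' = X and y0 ∈ X, contradicting the filter
            have hXX : X'' = X := by
              by_contra hne
              exact Finset.disjoint_left.mp (hXdisj hX''𝒳 hX𝒳 hne) hvX'' hvX
            rw [hXX] at hy0X''
            exact (Finset.mem_filter.mp hX𝒳'').2 hy0X''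
          · -- edge inside a member of 𝒴 : then Y'' = Y0 and v is an RX-rep in Y0
            have hYY : Y'' = Y0 := by
              by_contra hne
              exact Finset.disjoint_left.mp (hYdisj hY''𝒴 hY0𝒴 hne) hy0Y'' hy0Y0
            rw [hYY] at hvY''
            exact hY0 X (h𝒳''sub hX𝒳'') v (Finset.mem_inter.mpr ⟨hvX, hvRX⟩) hvY''
        · exact hRYind y0 hy0RY v hvRY hadj
      refine ⟨insert y0 R', ?_, ?_, ?_, ?_⟩
      · intro v hv
        rcases Finset.mem_insert.mp hv with rfl | hv'
        · exact Or.inr ⟨hy0RY, Y0, hY0mem, hy0Y0⟩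
        · rcases hinv' v hv' with ⟨h1, X, hX, h2⟩ | ⟨h1, Y, hY, h2⟩
          · exact Or.inl ⟨h1, X, h𝒳''sub hX, h2⟩
          · exact Or.inr ⟨h1, Y, Finset.mem_of_mem_erase hY, h2⟩
      · intro u hu v hv
        rcases Finset.mem_insert.mp hu with rfl | hu' <;>
          rcases Finset.mem_insert.mp hv with rfl | hv'
        · exact fun h => G.loopless.irrefl _ h
        · exact hkey v hv'
        · exact fun h => hkey u hu' h.symm
        · exact hind' u hu' v hv'
      · intro X hX
        by_cases hy0X : y0 ∈ X
        · exact ⟨y0, Finset.mem_insert_self _ _, hy0X⟩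
        · obtain ⟨v, hv, hvX⟩ := hcovX' X (Finset.mem_filter.mpr ⟨hX, hy0X⟩)
          exact ⟨v, Finset.mem_insert_of_mem hv, hvX⟩
      · intro Y hY
        by_cases hYY0 : Y = Y0
        · exact ⟨y0, Finset.mem_insert_self _ _, hYY0 ▸ hy0Y0⟩
        · obtain ⟨v, hv, hvY⟩ := hcovY' Y (Finset.mem_erase.mpr ⟨hYY0, hY⟩)
          exact ⟨v, Finset.mem_insert_of_mem hv, hvY⟩

/-- Combining two ISRs when there are no `E_{XY}`-edges: if every edge of the induced
subgraph on `R_X ∪ R_Y` has both endpoints in a common member of `𝒳` or a common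
member of `𝒴`, then there is an independent `R ⊆ R_X ∪ R_Y` hitting every member
of `𝒳` and every member of `𝒴`. -/
theorem stmt6 {V : Type*} [DecidableEq V] (G : SimpleGraph V)
    (𝒳 𝒴 : Finset (Finset V))
    (hXdisj : (𝒳 : Set (Finset V)).Pairwise fun A B => Disjoint A B)
    (hYdisj : (𝒴 : Set (Finset V)).Pairwise fun A B => Disjoint A B)
    (RX RY : Finset V)
    (hRXind : ∀ u ∈ RX, ∀ v ∈ RX, ¬ G.Adj u v)
    (hRXrep : ∀ X ∈ 𝒳, (X ∩ RX).card = 1)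
    (hRYind : ∀ u ∈ RY, ∀ v ∈ RY, ¬ G.Adj u v)
    (hRYrep : ∀ Y ∈ 𝒴, (Y ∩ RY).card = 1)
    (hedge : ∀ u ∈ RX ∪ RY, ∀ v ∈ RX ∪ RY, G.Adj u v →
      (∃ X ∈ 𝒳, u ∈ X ∧ v ∈ X) ∨ (∃ Y ∈ 𝒴, u ∈ Y ∧ v ∈ Y)) :
    ∃ R ⊆ RX ∪ RY, (∀ u ∈ R, ∀ v ∈ R, ¬ G.Adj u v) ∧
      (∀ X ∈ 𝒳, ∃ v ∈ R, v ∈ X) ∧ (∀ Y ∈ 𝒴, ∃ v ∈ R, v ∈ Y) := by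
  obtain ⟨R, hinv, hind, hcovX, hcovY⟩ :=
    stmt6_aux G 𝒳 𝒴 hXdisj hYdisj RX RY hRXind hRXrep hRYind hRYrep hedge
      𝒴.card 𝒳 𝒴 le_rfl Finset.Subset.rfl Finset.Subset.rfl
  refine ⟨R, ?_, hind, hcovX, hcovY⟩
  intro v hv
  rcases hinv v hv with ⟨h, _⟩ | ⟨h, _⟩
  · exact Finset.mem_union_left _ h
  · exact Finset.mem_union_right _ h
end

section
/- Let G be a graph, 𝒳 and 𝒴 collections of pairwise disjoint subsets of V(G), R_X an ISR of 𝒳 with representative v_X of each X ∈ 𝒳, and R_Y an ISR of 𝒴. Then G has an independent set R ⊆ R_X ∪ R_Y such that (i) R contains at least one vertex of each Y ∈ 𝒴, (ii) for each X ∈ 𝒳 whose representative v_X is incident to no E_{XY}-edge, R contains a vertex of X, and (iii) for each X ∈ 𝒳 whose representative v_X is incident to at least one E_{XY}-edge, R contains a vertex of X ∪ {w} for some vertex w with wv_X an E_{XY}-edge. -/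
/-- `EXYedge G 𝒳 𝒴 RX RY u w` says `uw` is an edge of the induced subgraph on
`RX ∪ RY` that is neither an `𝒳`-edge nor a `𝒴`-edge. -/
def EXYedge {V : Type*} [DecidableEq V] (G : SimpleGraph V) (𝒳 𝒴 : Finset (Finset V))
    (RX RY : Finset V) (u w : V) : Prop :=
  u ∈ RX ∪ RY ∧ w ∈ RX ∪ RY ∧ G.Adj u w ∧
    ¬ (∃ X ∈ 𝒳, u ∈ X ∧ w ∈ X) ∧ ¬ (∃ Y ∈ 𝒴, u ∈ Y ∧ w ∈ Y)

section Aux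

variable {V : Type*} [DecidableEq V] (G : SimpleGraph V) (𝒳 𝒴 : Finset (Finset V))
  (RY : Finset V) (rep : Finset V → V)

/-- `X` is good w.r.t. a removal set `B`: every `RY`-neighbor of `rep X` is either
a `𝒴`-edge or already removed. -/
def goodX (B X : Finset V) : Prop :=
  ∀ w' ∈ RY, G.Adj (rep X) w' → (∃ Y ∈ 𝒴, rep X ∈ Y ∧ w' ∈ Y) ∨ w' ∈ B

open Classical in
/-- The removal operator: all `RY`-vertices adjacent to the representative of a good `X`. -/
noncomputable def FXY (B : Finset V) : Finset V :=
  RY.filter fun w => ∃ X ∈ 𝒳, G.Adj (rep X) w ∧ goodX G 𝒴 RY rep B X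

/-- Iteration of the removal operator from `∅`. -/
noncomputable def bXY : ℕ → Finset V
  | 0 => ∅
  | n + 1 => FXY G 𝒳 𝒴 RY rep (bXY n)

theorem goodX_mono {B B' : Finset V} (h : B ⊆ B') {X : Finset V}
    (hg : goodX G 𝒴 RY rep B X) : goodX G 𝒴 RY rep B' X := by
  intro w hw hadj
  rcases hg w hw hadj with h1 | h1
  · exact Or.inl h1
  · exact Or.inr (h h1)

theorem FXY_mono {B B' : Finset V} (h : B ⊆ B') :
    FXY G 𝒳 𝒴 RY rep B ⊆ FXY G 𝒳 𝒴 RY rep B' := by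
  classical
  intro w hw
  simp only [FXY, Finset.mem_filter] at hw ⊢
  obtain ⟨hwRY, X, hX, hadj, hg⟩ := hw
  exact ⟨hwRY, X, hX, hadj, goodX_mono G 𝒴 RY rep h hg⟩

theorem bXY_mono : ∀ n, bXY G 𝒳 𝒴 RY rep n ⊆ bXY G 𝒳 𝒴 RY rep (n + 1)
  | 0 => by simp [bXY]
  | n + 1 => FXY_mono G 𝒳 𝒴 RY rep (bXY_mono n)

theorem bXY_le {n m : ℕ} (h : n ≤ m) :
    bXY G 𝒳 𝒴 RY rep n ⊆ bXY G 𝒳 𝒴 RY rep m := by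
  induction m with
  | zero => simp_all
  | succ m ih =>
    rcases Nat.lt_or_ge n (m + 1) with h' | h'
    · exact (ih (Nat.lt_succ_iff.mp h')).trans (bXY_mono G 𝒳 𝒴 RY rep m)
    · have : n = m + 1 := le_antisymm h h'
      subst this; exact Finset.Subset.refl _

theorem bXY_subset_RY : ∀ n, bXY G 𝒳 𝒴 RY rep n ⊆ RY
  | 0 => by simp [bXY]
  | n + 1 => by
    classical
    intro w hw
    simp only [bXY, FXY, Finset.mem_filter] at hw
    exact hw.1

theorem bXY_key : ∀ n, n ≤ (bXY G 𝒳 𝒴 RY rep n).card ∨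
    FXY G 𝒳 𝒴 RY rep (bXY G 𝒳 𝒴 RY rep n) = bXY G 𝒳 𝒴 RY rep n := by
  intro n
  induction n with
  | zero => exact Or.inl (Nat.zero_le _)
  | succ n ih =>
    by_cases hfix : FXY G 𝒳 𝒴 RY rep (bXY G 𝒳 𝒴 RY rep n) = bXY G 𝒳 𝒴 RY rep n
    · right
      have h1 : bXY G 𝒳 𝒴 RY rep (n + 1) = bXY G 𝒳 𝒴 RY rep n := hfix
      rw [h1]; exact hfix
    · left
      rcases ih with hn | hn
      · have hss : bXY G 𝒳 𝒴 RY rep n ⊂ bXY G 𝒳 𝒴 RY rep (n + 1) := by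
          refine Finset.ssubset_iff_subset_ne.mpr ⟨bXY_mono G 𝒳 𝒴 RY rep n, ?_⟩
          intro h
          exact hfix h.symm
        have := Finset.card_lt_card hss
        omega
      · exact absurd hn hfix

end Aux

/-- The general ISR combining theorem: there is an independent `R ⊆ R_X ∪ R_Y` that is
an ISR of `𝒴`, hits every `X ∈ 𝒳` whose representative `v_X` is incident to no
`E_{XY}`-edge, and for every other `X ∈ 𝒳` hits `X ∪ {w}` for some `E_{XY}`-edge
`w v_X`. -/
theorem stmt7 {V : Type*} [DecidableEq V] (G : SimpleGraph V)
    (𝒳 𝒴 : Finset (Finset V))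
    (hXdisj : (𝒳 : Set (Finset V)).Pairwise fun A B => Disjoint A B)
    (hYdisj : (𝒴 : Set (Finset V)).Pairwise fun A B => Disjoint A B)
    (RX RY : Finset V)
    (hRXind : ∀ u ∈ RX, ∀ v ∈ RX, ¬ G.Adj u v)
    (hRXrep : ∀ X ∈ 𝒳, (X ∩ RX).card = 1)
    (hRYind : ∀ u ∈ RY, ∀ v ∈ RY, ¬ G.Adj u v)
    (hRYrep : ∀ Y ∈ 𝒴, (Y ∩ RY).card = 1)
    (rep : Finset V → V)
    (hrep : ∀ X ∈ 𝒳, rep X ∈ X ∧ rep X ∈ RX) :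
    ∃ R ⊆ RX ∪ RY, (∀ u ∈ R, ∀ v ∈ R, ¬ G.Adj u v) ∧
      (∀ Y ∈ 𝒴, ∃ v ∈ R, v ∈ Y) ∧
      (∀ X ∈ 𝒳,
        ((¬ ∃ w, EXYedge G 𝒳 𝒴 RX RY (rep X) w) → ∃ v ∈ R, v ∈ X) ∧
        ((∃ w, EXYedge G 𝒳 𝒴 RX RY (rep X) w) →
          ∃ w, EXYedge G 𝒳 𝒴 RX RY (rep X) w ∧ ∃ v ∈ R, (v ∈ X ∨ v = w))) := by
  classical
  -- disjointness consequences
  have hYeq : ∀ {Y Y' : Finset V} {x : V}, Y ∈ 𝒴 → Y' ∈ 𝒴 → x ∈ Y → x ∈ Y' → Y = Y' := by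
    intro Y Y' x hY hY' hx hx'
    by_contra hne
    exact (Finset.disjoint_left.mp (hYdisj hY hY' hne) hx) hx'
  have hXeq : ∀ {X X' : Finset V} {x : V}, X ∈ 𝒳 → X' ∈ 𝒳 → x ∈ X → x ∈ X' → X = X' := by
    intro X X' x hX hX' hx hx'
    by_contra hne
    exact (Finset.disjoint_left.mp (hXdisj hX hX' hne) hx) hx'
  set N := RY.card + 1 with hN
  set B := bXY G 𝒳 𝒴 RY rep N with hB
  have hfix : FXY G 𝒳 𝒴 RY rep B = B := by
    rcases bXY_key G 𝒳 𝒴 RY rep N with h | h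
    · have := Finset.card_le_card (bXY_subset_RY G 𝒳 𝒴 RY rep N)
      omega
    · exact h
  have hBRY : B ⊆ RY := bXY_subset_RY G 𝒳 𝒴 RY rep N
  have hBsub : ∀ n, bXY G 𝒳 𝒴 RY rep n ⊆ B := by
    have hconst : ∀ k, bXY G 𝒳 𝒴 RY rep (N + k) = B := by
      intro k
      induction k with
      | zero => rfl
      | succ k ih =>
        have : bXY G 𝒳 𝒴 RY rep (N + (k + 1)) = FXY G 𝒳 𝒴 RY rep (bXY G 𝒳 𝒴 RY rep (N + k)) := rfl
        rw [this, ih, hfix]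
    intro n
    rcases Nat.le_total n N with h | h
    · exact bXY_le G 𝒳 𝒴 RY rep h
    · have : n = N + (n - N) := by omega
      rw [this, hconst]
  -- neighbors of good representatives are all in B
  have hNB : ∀ X ∈ 𝒳, goodX G 𝒴 RY rep B X → ∀ w ∈ RY, G.Adj (rep X) w → w ∈ B := by
    intro X hX hg w hw hadj
    have : w ∈ FXY G 𝒳 𝒴 RY rep B := by
      simp only [FXY, Finset.mem_filter]
      exact ⟨hw, X, hX, hadj, hg⟩
    rwa [hfix] at this
  -- Y-coverage of B
  have hYcov : ∀ n, ∀ w ∈ bXY G 𝒳 𝒴 RY rep n, ∀ Y ∈ 𝒴, w ∈ Y →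
      ∃ X ∈ 𝒳, goodX G 𝒴 RY rep B X ∧ rep X ∈ Y := by
    intro n
    induction n with
    | zero => simp [bXY]
    | succ n ih =>
      intro w hw Y hY hwY
      simp only [bXY, FXY, Finset.mem_filter] at hw
      obtain ⟨hwRY, X, hX, hadj, hg⟩ := hw
      rcases hg w hwRY hadj with ⟨Y', hY', hrY', hwY'⟩ | hwb
      · have : Y' = Y := hYeq hY' hY hwY' hwY
        exact ⟨X, hX, goodX_mono G 𝒴 RY rep (hBsub n) hg, this ▸ hrY'⟩
      · exact ih w hwb Y hY hwY
  -- the independent set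
  set A : Finset V := (𝒳.filter fun X => goodX G 𝒴 RY rep B X).image rep with hA
  set R : Finset V := (RY \ B) ∪ A with hR
  have hAmem : ∀ v ∈ A, ∃ X ∈ 𝒳, goodX G 𝒴 RY rep B X ∧ v = rep X := by
    intro v hv
    simp only [hA, Finset.mem_image, Finset.mem_filter] at hv
    obtain ⟨X, ⟨hX, hg⟩, rfl⟩ := hv
    exact ⟨X, hX, hg, rfl⟩
  have hgoodR : ∀ X ∈ 𝒳, goodX G 𝒴 RY rep B X → rep X ∈ R := by
    intro X hX hg
    refine Finset.mem_union_right _ ?_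
    simp only [hA, Finset.mem_image, Finset.mem_filter]
    exact ⟨X, ⟨hX, hg⟩, rfl⟩
  have hsdR : ∀ w ∈ RY, w ∉ B → w ∈ R :=
    fun w hw hwB => Finset.mem_union_left _ (Finset.mem_sdiff.mpr ⟨hw, hwB⟩)
  refine ⟨R, ?_, ?_, ?_, ?_⟩
  · -- R ⊆ RX ∪ RY
    intro v hv
    rcases Finset.mem_union.mp hv with hv | hv
    · exact Finset.mem_union_right _ (Finset.mem_sdiff.mp hv).1
    · obtain ⟨X, hX, _, rfl⟩ := hAmem v hv
      exact Finset.mem_union_left _ (hrep X hX).2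
  · -- independence
    intro u hu v hv hadj
    rcases Finset.mem_union.mp hu with hu | hu <;> rcases Finset.mem_union.mp hv with hv | hv
    · exact hRYind u (Finset.mem_sdiff.mp hu).1 v (Finset.mem_sdiff.mp hv).1 hadj
    · obtain ⟨X, hX, hg, rfl⟩ := hAmem v hv
      obtain ⟨huRY, huB⟩ := Finset.mem_sdiff.mp hu
      exact huB (hNB X hX hg u huRY hadj.symm)
    · obtain ⟨X, hX, hg, rfl⟩ := hAmem u hu
      obtain ⟨hvRY, hvB⟩ := Finset.mem_sdiff.mp hv
      exact hvB (hNB X hX hg v hvRY hadj)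
    · obtain ⟨X, hX, _, rfl⟩ := hAmem u hu
      obtain ⟨X', hX', _, rfl⟩ := hAmem v hv
      exact hRXind _ (hrep X hX).2 _ (hrep X' hX').2 hadj
  · -- ISR of 𝒴
    intro Y hY
    obtain ⟨w, hw⟩ := Finset.card_eq_one.mp (hRYrep Y hY)
    have hwY : w ∈ Y := (Finset.mem_inter.mp (hw ▸ Finset.mem_singleton_self w)).1
    have hwRY : w ∈ RY := (Finset.mem_inter.mp (hw ▸ Finset.mem_singleton_self w)).2
    by_cases hwB : w ∈ B
    · obtain ⟨X, hX, hg, hrY⟩ := hYcov N w hwB Y hY hwY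
      exact ⟨rep X, hgoodR X hX hg, hrY⟩
    · exact ⟨w, hsdR w hwRY hwB, hwY⟩
  · -- 𝒳 conditions
    intro X hX
    obtain ⟨hrX, hrRX⟩ := hrep X hX
    constructor
    · intro hno
      by_cases hc : ∃ w ∈ X ∩ RY, w ∉ B
      · obtain ⟨w, hw, hwB⟩ := hc
        obtain ⟨hwX, hwRY⟩ := Finset.mem_inter.mp hw
        exact ⟨w, hsdR w hwRY hwB, hwX⟩
      · push_neg at hc
        have hg : goodX G 𝒴 RY rep B X := by
          intro w' hw' hadj
          by_cases hYe : ∃ Y ∈ 𝒴, rep X ∈ Y ∧ w' ∈ Y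
          · exact Or.inl hYe
          · right
            have hXe : ∃ X' ∈ 𝒳, rep X ∈ X' ∧ w' ∈ X' := by
              by_contra hXe
              exact hno ⟨w', Finset.mem_union_left _ hrRX, Finset.mem_union_right _ hw',
                hadj, hXe, hYe⟩
            obtain ⟨X', hX', hrX', hwX'⟩ := hXe
            have : X' = X := hXeq hX' hX hrX' hrX
            exact hc w' (Finset.mem_inter.mpr ⟨this ▸ hwX', hw'⟩)
        exact ⟨rep X, hgoodR X hX hg, hrX⟩
    · rintro ⟨w₀, hw₀⟩
      by_cases hc : ∃ w ∈ X ∩ RY, w ∉ B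
      · obtain ⟨w, hw, hwB⟩ := hc
        obtain ⟨hwX, hwRY⟩ := Finset.mem_inter.mp hw
        exact ⟨w₀, hw₀, w, hsdR w hwRY hwB, Or.inl hwX⟩
      · by_cases hg : goodX G 𝒴 RY rep B X
        · exact ⟨w₀, hw₀, rep X, hgoodR X hX hg, Or.inl hrX⟩
        · simp only [goodX, not_forall] at hg
          obtain ⟨w', hw'RY, hadj, hbad⟩ := hg
          have hYe : ¬ ∃ Y ∈ 𝒴, rep X ∈ Y ∧ w' ∈ Y := fun h => hbad (Or.inl h)
          have hwB : w' ∉ B := fun h => hbad (Or.inr h)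
          have hXe : ¬ ∃ X' ∈ 𝒳, rep X ∈ X' ∧ w' ∈ X' := by
            rintro ⟨X', hX', hrX', hwX'⟩
            have : X' = X := hXeq hX' hX hrX' hrX
            exact hc ⟨w', Finset.mem_inter.mpr ⟨this ▸ hwX', hw'RY⟩, hwB⟩
          exact ⟨w', ⟨Finset.mem_union_left _ hrRX, Finset.mem_union_right _ hw'RY,
            hadj, hXe, hYe⟩, w', hsdR w' hw'RY hwB, Or.inr rfl⟩
end

section
/- Let G be obtained from a disjoint union H of triangles by gluing on vertex-disjoint triangles, where every vertex of H lies in exactly one glued triangle. Then χ(G) ≤ 3. -/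
open Finset

/-- One Hall step: extract a transversal hitting each fibre exactly once. -/
private lemma hall_step {V α β : Type*} [Fintype V] [DecidableEq V]
    [DecidableEq α] [DecidableEq β] [Fintype α] [Fintype β]
    (tH : V → α) (tY : V → β) (S : Finset V) (k : ℕ) (hk : 0 < k)
    (hHS : ∀ a, (S.filter fun v => tH v = a).card = k)
    (hYS : ∀ b, (S.filter fun v => tY v = b).card = k) :
    ∃ M : Finset V, M ⊆ S ∧ (∀ a, (M.filter fun v => tH v = a).card = 1) ∧
      (∀ b, (M.filter fun v => tY v = b).card = 1) := by
  set t : α → Finset β := fun a => (S.filter fun v => tH v = a).image tY with ht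
  have hall : ∀ A : Finset α, A.card ≤ (A.biUnion t).card := by
    intro A
    have h1 : (S.filter fun v => tH v ∈ A) = A.biUnion fun a => S.filter fun v => tH v = a := by
      ext v; simp [Finset.mem_biUnion]; tauto
    have h2 : (S.filter fun v => tH v ∈ A).card = k * A.card := by
      rw [h1, Finset.card_biUnion]
      · simp [hHS, mul_comm]
      · intro a _ a' _ hne
        simp only [Finset.disjoint_filter]
        intro v _ h1 h2; exact hne (h1.symm.trans h2)
    have h3 : (S.filter fun v => tH v ∈ A) ⊆ S.filter fun v => tY v ∈ A.biUnion t := by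
      intro v hv
      simp only [Finset.mem_filter] at hv ⊢
      refine ⟨hv.1, Finset.mem_biUnion.mpr ⟨tH v, hv.2, ?_⟩⟩
      exact Finset.mem_image.mpr ⟨v, by simp [hv.1], rfl⟩
    have h4 : (S.filter fun v => tY v ∈ A.biUnion t)
        = (A.biUnion t).biUnion fun b => S.filter fun v => tY v = b := by
      ext v; simp [Finset.mem_biUnion]; tauto
    have h5 : (S.filter fun v => tY v ∈ A.biUnion t).card = k * (A.biUnion t).card := by
      rw [h4, Finset.card_biUnion]
      · simp [hYS, mul_comm]
      · intro b _ b' _ hne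
        simp only [Finset.disjoint_filter]
        intro v _ h1 h2; exact hne (h1.symm.trans h2)
    have := Finset.card_le_card h3
    rw [h2, h5] at this
    exact Nat.le_of_mul_le_mul_left this hk
  obtain ⟨f, hfinj, hft⟩ := (Finset.all_card_le_biUnion_card_iff_exists_injective t).mp hall
  -- card α = card β
  have e1 : S.card = k * Fintype.card α := by
    rw [Finset.card_eq_sum_card_fiberwise (f := tH) (t := Finset.univ) (fun x _ => mem_univ _)]
    simp [hHS, Finset.card_univ, mul_comm]
  have e2 : S.card = k * Fintype.card β := by
    rw [Finset.card_eq_sum_card_fiberwise (f := tY) (t := Finset.univ) (fun x _ => mem_univ _)]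
    simp [hYS, Finset.card_univ, mul_comm]
  have hcard : Fintype.card α = Fintype.card β :=
    Nat.eq_of_mul_eq_mul_left hk (e1 ▸ e2)
  have hfbij : Function.Bijective f :=
    (Fintype.bijective_iff_injective_and_card f).mpr ⟨hfinj, hcard⟩
  choose g hg1 hg2 using fun a => Finset.mem_image.mp (hft a)
  have hgS : ∀ a, g a ∈ S := fun a => (Finset.mem_filter.mp (hg1 a)).1
  have hgH : ∀ a, tH (g a) = a := fun a => (Finset.mem_filter.mp (hg1 a)).2
  refine ⟨Finset.univ.image g, ?_, ?_, ?_⟩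
  · intro v hv
    obtain ⟨a, _, rfl⟩ := Finset.mem_image.mp hv
    exact hgS a
  · intro a
    have : (Finset.univ.image g).filter (fun v => tH v = a) = {g a} := by
      ext v
      simp only [Finset.mem_filter, Finset.mem_image, Finset.mem_singleton]
      constructor
      · rintro ⟨⟨a', -, rfl⟩, h⟩; rw [hgH a'] at h; rw [h]
      · rintro rfl; exact ⟨⟨a, mem_univ _, rfl⟩, hgH a⟩
    rw [this, Finset.card_singleton]
  · intro b
    obtain ⟨a, rfl⟩ := hfbij.2 b
    have : (Finset.univ.image g).filter (fun v => tY v = f a) = {g a} := by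
      ext v
      simp only [Finset.mem_filter, Finset.mem_image, Finset.mem_singleton]
      constructor
      · rintro ⟨⟨a', -, rfl⟩, h⟩
        rw [hg2 a'] at h
        rw [hfinj h]
      · rintro rfl; exact ⟨⟨a, mem_univ _, rfl⟩, hg2 a⟩
    rw [this, Finset.card_singleton]

private lemma sub_card {V : Type*} [DecidableEq V] {S M : Finset V} {P : V → Prop}
    [DecidablePred P] {k : ℕ} (hMS : M ⊆ S)
    (hS : (S.filter P).card = k) (hM : (M.filter P).card = 1) :
    ((S \ M).filter P).card = k - 1 := by
  have h1 : (S \ M).filter P = S.filter P \ M.filter P := by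
    ext v; simp only [Finset.mem_filter, Finset.mem_sdiff]; tauto
  have h2 : M.filter P ⊆ S.filter P := Finset.filter_subset_filter _ hMS
  rw [h1, Finset.card_sdiff_of_subset h2, hS, hM]

private lemma uniq {V γ : Type*} [DecidableEq γ] {N : Finset V} {t : V → γ}
    (h : ∀ c, (N.filter fun v => t v = c).card ≤ 1) {u v : V}
    (hu : u ∈ N) (hv : v ∈ N) (he : t u = t v) : u = v := by
  have := Finset.card_le_one.mp (h (t v))
  exact this u (Finset.mem_filter.mpr ⟨hu, he⟩) v (Finset.mem_filter.mpr ⟨hv, rfl⟩)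

/-- Triangles glued onto a disjoint union of triangles give a 3-colourable graph:
if every vertex lies in exactly one `H`-triangle (fibre of `tH`, of size 3) and
exactly one glued triangle (fibre of `tY`, of size 3), and every edge of `G` lies
inside an `H`-triangle or inside a glued triangle, then `χ(G) ≤ 3`. -/
theorem stmt9 {V α β : Type*} [Fintype V] [DecidableEq α] [DecidableEq β]
    (G : SimpleGraph V) (tH : V → α) (tY : V → β)
    (hH : ∀ a : α, (Finset.univ.filter fun v => tH v = a).card = 3)
    (hY : ∀ b : β, (Finset.univ.filter fun v => tY v = b).card = 3)
    (hGlue : ∀ u v : V, G.Adj u v → tH u = tH v ∨ tY u = tY v) :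
    G.Colorable 3 := by
  classical
  have hHsurj : Function.Surjective tH := by
    intro a
    have : (Finset.univ.filter fun v => tH v = a).Nonempty := by
      rw [← Finset.card_pos, hH a]; norm_num
    obtain ⟨v, hv⟩ := this
    exact ⟨v, (Finset.mem_filter.mp hv).2⟩
  have hYsurj : Function.Surjective tY := by
    intro b
    have : (Finset.univ.filter fun v => tY v = b).Nonempty := by
      rw [← Finset.card_pos, hY b]; norm_num
    obtain ⟨v, hv⟩ := this
    exact ⟨v, (Finset.mem_filter.mp hv).2⟩
  haveI : Fintype α := Fintype.ofSurjective tH hHsurj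
  haveI : Fintype β := Fintype.ofSurjective tY hYsurj
  obtain ⟨M3, hM3S, hM3H, hM3Y⟩ := hall_step tH tY Finset.univ 3 (by norm_num) hH hY
  have hH2 : ∀ a, ((Finset.univ \ M3).filter fun v => tH v = a).card = 2 :=
    fun a => sub_card hM3S (hH a) (hM3H a)
  have hY2 : ∀ b, ((Finset.univ \ M3).filter fun v => tY v = b).card = 2 :=
    fun b => sub_card hM3S (hY b) (hM3Y b)
  obtain ⟨M2, hM2S, hM2H, hM2Y⟩ :=
    hall_step tH tY (Finset.univ \ M3) 2 (by norm_num) hH2 hY2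
  set S1 := (Finset.univ \ M3) \ M2 with hS1
  have hH1 : ∀ a, (S1.filter fun v => tH v = a).card = 1 :=
    fun a => sub_card hM2S (hH2 a) (hM2H a)
  have hY1 : ∀ b, (S1.filter fun v => tY v = b).card = 1 :=
    fun b => sub_card hM2S (hY2 b) (hM2Y b)
  have hS1mem : ∀ v : V, v ∉ M3 → v ∉ M2 → v ∈ S1 := by
    intro v h3 h2; simp [hS1, h3, h2]
  refine ⟨SimpleGraph.Coloring.mk
    (fun v => if v ∈ M3 then (0 : Fin 3) else if v ∈ M2 then 1 else 2) ?_⟩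
  intro u v hadj hc
  have hne : u ≠ v := G.ne_of_adj hadj
  have hT := hGlue u v hadj
  have same : ∀ {N : Finset V}, (∀ a, (N.filter fun w => tH w = a).card ≤ 1) →
      (∀ b, (N.filter fun w => tY w = b).card ≤ 1) → u ∈ N → v ∈ N → u = v := by
    intro N h1 h2 hu hv
    rcases hT with h | h
    · exact uniq h1 hu hv h
    · exact uniq h2 hu hv h
  by_cases hu3 : u ∈ M3 <;> by_cases hv3 : v ∈ M3 <;>
    by_cases hu2 : u ∈ M2 <;> by_cases hv2 : v ∈ M2 <;>
    simp only [hu3, hv3, hu2, hv2, if_true, if_false] at hc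
  all_goals first
    | exact absurd hc (by decide)
    | (exact hne (same (fun a => le_of_eq (hM3H a)) (fun b => le_of_eq (hM3Y b)) hu3 hv3))
    | (exact hne (same (fun a => le_of_eq (hM2H a)) (fun b => le_of_eq (hM2Y b)) hu2 hv2))
    | (exact hne (same (fun a => le_of_eq (hH1 a)) (fun b => le_of_eq (hY1 b))
        (hS1mem u hu3 hu2) (hS1mem v hv3 hv2)))
end
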